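/- Let μ be a Borel probability measure on ℂ with compact support and Newton potential M(ξ) = ∫ 1/|w − ξ| dμ(w). If μ({ζ}) = 0, then for every ε > 0 the set Π(ε) = {w ∈ ℂ : |w − ζ|·M(w) > ε} satisfies lim_{r→0} L(Π(ε) ∩ D(ζ,r))/(πr²) = 0. -/

import Mathlib

open MeasureTheory Filter Metric
open scoped ENNReal Real Topology

/-!
By Chebyshev's inequality, `ε · L(Π(ε) ∩ D(ζ,r)) ≤ ∫_{D(ζ,r)} |w - ζ| M(w) dL ≤ r ∫_{D(ζ,r)} M dL`,
and by Tonelli `∫_{D(ζ,r)} M dL = ∫ (∫_{D(ζ,r)} dL(z) / |a - z|) dμ(a)`. The inner integral is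
at most `3πr` for every `a` (the part over `D(a,r)` is `2πr` in polar coordinates around `a`, the
rest is at most `πr² / r`), and it is at most `2πr²/δ` when `|a - ζ| ≥ δ ≥ 2r`. Hence
`L(Π(ε) ∩ D(ζ,r)) / (πr²) ≤ ε⁻¹ (3 μ(D̄(ζ,δ)) + 2r/δ)`; with `δ = √r` the right-hand side tends
to `3 ε⁻¹ μ({ζ}) = 0`.
-/

open Set

noncomputable def newtonPotential (μ : Measure ℂ) (ξ : ℂ) : ℝ≥0∞ :=
  ∫⁻ w, ENNReal.ofReal (1 / ‖w - ξ‖) ∂μ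

theorem measurable_ofReal_inv_norm_sub :
    Measurable fun p : ℂ × ℂ => ENNReal.ofReal (1 / ‖p.2 - p.1‖) := by
  fun_prop

theorem measurable_newtonPotential (μ : Measure ℂ) [SFinite μ] :
    Measurable (newtonPotential μ) :=
  measurable_ofReal_inv_norm_sub.lintegral_prod_right'

theorem lintegral_ball_zero_inv_norm {r : ℝ} (hr : 0 ≤ r) :
    ∫⁻ z in ball (0 : ℂ) r, ENNReal.ofReal (1 / ‖z‖) = ENNReal.ofReal (2 * π * r) := by
  rw [← lintegral_indicator measurableSet_ball, ← Complex.lintegral_comp_polarCoord_symm,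
    polarCoord_target]
  have h_polar : ∀ p ∈ Ioi (0 : ℝ) ×ˢ Ioo (-π) π,
      ENNReal.ofReal p.1 • (ball (0 : ℂ) r).indicator (fun z => ENNReal.ofReal (1 / ‖z‖))
        (Complex.polarCoord.symm p) = (Iio r ×ˢ univ).indicator 1 p := by
    rintro ⟨ρ, θ⟩ ⟨hρ, -⟩
    simp only [mem_Ioi] at hρ
    simp [indicator, abs_of_pos hρ, ← ENNReal.ofReal_mul hρ.le, hρ.ne']
  rw [setLIntegral_congr_fun (measurableSet_Ioi.prod measurableSet_Ioo) h_polar,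
    lintegral_indicator_one (measurableSet_Iio.prod MeasurableSet.univ),
    Measure.restrict_apply (measurableSet_Iio.prod MeasurableSet.univ), prod_inter_prod,
    inter_comm, Ioi_inter_Iio, univ_inter, Measure.volume_eq_prod, Measure.prod_prod,
    Real.volume_Ioo, Real.volume_Ioo, ← ENNReal.ofReal_mul (by linarith)]
  ring_nf

theorem lintegral_ball_inv_norm_sub (a : ℂ) {r : ℝ} (hr : 0 ≤ r) :
    ∫⁻ z in ball a r, ENNReal.ofReal (1 / ‖a - z‖) = ENNReal.ofReal (2 * π * r) := by
  have h_shift : (ball a r).indicator (fun z => ENNReal.ofReal (1 / ‖a - z‖)) =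
      fun z => (ball (0 : ℂ) r).indicator (fun z => ENNReal.ofReal (1 / ‖z‖)) (a - z) := by
    ext z
    simp only [indicator, mem_ball_iff_norm', zero_sub, norm_neg]
  rw [← lintegral_indicator measurableSet_ball, h_shift, lintegral_sub_left_eq_self,
    lintegral_indicator measurableSet_ball, lintegral_ball_zero_inv_norm hr]

theorem setLIntegral_inv_norm_sub_le {E : Type*} [NormedAddCommGroup E] [MeasurableSpace E]
    (ν : Measure E) {a : E} {s : Set E} {c : ℝ} (hc : 0 < c) (h : ∀ z ∈ s, c ≤ ‖a - z‖) :
    ∫⁻ z in s, ENNReal.ofReal (1 / ‖a - z‖) ∂ν ≤ ENNReal.ofReal (1 / c) * ν s := by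
  rw [← setLIntegral_const]
  refine setLIntegral_mono measurable_const fun z hz => ?_
  gcongr
  exact h z hz

theorem Complex.volume_ball_eq_ofReal (a : ℂ) {r : ℝ} (hr : 0 ≤ r) :
    volume (ball a r) = ENNReal.ofReal (π * r ^ 2) := by
  rw [Complex.volume_ball, ← ENNReal.ofReal_pow hr, ← ENNReal.ofReal_coe_nnreal,
    NNReal.coe_real_pi, ← ENNReal.ofReal_mul (by positivity), mul_comm]

theorem lintegral_ball_inv_norm_sub_le (a ζ : ℂ) {r : ℝ} (hr : 0 < r) :
    ∫⁻ z in ball ζ r, ENNReal.ofReal (1 / ‖a - z‖) ≤ ENNReal.ofReal (π * r) * 3 := by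
  have h_far : ∀ z ∈ ball ζ r \ ball a r, r ≤ ‖a - z‖ := fun z hz =>
    not_lt.mp fun h => hz.2 (mem_ball_iff_norm'.mpr h)
  calc ∫⁻ z in ball ζ r, ENNReal.ofReal (1 / ‖a - z‖)
      ≤ ∫⁻ z in (ball ζ r \ ball a r) ∪ ball a r, ENNReal.ofReal (1 / ‖a - z‖) :=
        lintegral_mono_set (subset_sdiff_union _ _)
    _ ≤ ENNReal.ofReal (1 / r) * volume (ball ζ r) + ENNReal.ofReal (2 * π * r) := by
        refine (lintegral_union_le _ _ _).trans
          (add_le_add ?_ (lintegral_ball_inv_norm_sub a hr.le).le)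
        exact (setLIntegral_inv_norm_sub_le volume hr h_far).trans (by gcongr; exact sdiff_subset)
    _ = ENNReal.ofReal (π * r) * 3 := by
        rw [Complex.volume_ball_eq_ofReal ζ hr.le, ← ENNReal.ofReal_mul (by positivity),
          ← ENNReal.ofReal_add (by positivity) (by positivity), ← ENNReal.ofReal_ofNat 3,
          ← ENNReal.ofReal_mul (by positivity)]
        congr 1
        field_simp
        ring

theorem lintegral_ball_inv_norm_sub_le_of_le_dist {a ζ : ℂ} {r δ : ℝ} (hr : 0 < r)
    (hrδ : 2 * r ≤ δ) (ha : δ ≤ dist a ζ) :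
    ∫⁻ z in ball ζ r, ENNReal.ofReal (1 / ‖a - z‖) ≤
      ENNReal.ofReal (π * r) * ENNReal.ofReal (2 * r / δ) := by
  have hδ : 0 < δ / 2 := by linarith
  have h_far : ∀ z ∈ ball ζ r, δ / 2 ≤ ‖a - z‖ := fun z hz => by
    have := dist_triangle a z ζ
    rw [mem_ball] at hz
    rw [← dist_eq_norm]
    linarith
  calc ∫⁻ z in ball ζ r, ENNReal.ofReal (1 / ‖a - z‖)
      ≤ ENNReal.ofReal (1 / (δ / 2)) * volume (ball ζ r) :=
        setLIntegral_inv_norm_sub_le volume hδ h_far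
    _ = ENNReal.ofReal (π * r) * ENNReal.ofReal (2 * r / δ) := by
        rw [Complex.volume_ball_eq_ofReal ζ hr.le, ← ENNReal.ofReal_mul (by positivity),
          ← ENNReal.ofReal_mul (by positivity)]
        congr 1
        field_simp

theorem lintegral_ball_newtonPotential_le (μ : Measure ℂ) [SFinite μ] (ζ : ℂ) {r δ : ℝ}
    (hr : 0 < r) (hrδ : 2 * r ≤ δ) :
    ∫⁻ z in ball ζ r, newtonPotential μ z ≤
      ENNReal.ofReal (π * r) *
        (3 * μ (closedBall ζ δ) + ENNReal.ofReal (2 * r / δ) * μ univ) := by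
  unfold newtonPotential
  rw [lintegral_lintegral_swap measurable_ofReal_inv_norm_sub.aemeasurable,
    ← lintegral_add_compl _ measurableSet_closedBall]
  calc (∫⁻ a in closedBall ζ δ, (∫⁻ z in ball ζ r, ENNReal.ofReal (1 / ‖a - z‖)) ∂μ) +
        ∫⁻ a in (closedBall ζ δ)ᶜ, (∫⁻ z in ball ζ r, ENNReal.ofReal (1 / ‖a - z‖)) ∂μ
      ≤ (∫⁻ _ in closedBall ζ δ, ENNReal.ofReal (π * r) * 3 ∂μ) +
        ∫⁻ _ in (closedBall ζ δ)ᶜ, ENNReal.ofReal (π * r) * ENNReal.ofReal (2 * r / δ) ∂μ := by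
        refine add_le_add (setLIntegral_mono measurable_const fun a _ => ?_)
          (setLIntegral_mono measurable_const fun a ha => ?_)
        · exact lintegral_ball_inv_norm_sub_le a ζ hr
        · exact lintegral_ball_inv_norm_sub_le_of_le_dist hr hrδ
            (not_le.mp (mt mem_closedBall.mpr ha)).le
    _ ≤ ENNReal.ofReal (π * r) * 3 * μ (closedBall ζ δ) +
        ENNReal.ofReal (π * r) * ENNReal.ofReal (2 * r / δ) * μ univ := by
        rw [setLIntegral_const, setLIntegral_const]
        gcongr
        exact subset_univ _
    _ = _ := by ring

theorem volume_inter_ball_le (μ : Measure ℂ) [SFinite μ] (ζ : ℂ) {ε r δ : ℝ} (hε : 0 < ε)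
    (hr : 0 < r) (hrδ : 2 * r ≤ δ) :
    volume ({w : ℂ | ENNReal.ofReal ε < ENNReal.ofReal ‖w - ζ‖ * newtonPotential μ w}
        ∩ ball ζ r) ≤
      (ENNReal.ofReal ε)⁻¹ * (3 * μ (closedBall ζ δ) + ENNReal.ofReal (2 * r / δ) * μ univ) *
        ENNReal.ofReal (π * r ^ 2) := by
  have hM := measurable_newtonPotential μ
  have h_chebyshev : ENNReal.ofReal ε * volume ({w : ℂ | ENNReal.ofReal ε <
        ENNReal.ofReal ‖w - ζ‖ * newtonPotential μ w} ∩ ball ζ r) ≤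
      ∫⁻ w in ball ζ r, ENNReal.ofReal ‖w - ζ‖ * newtonPotential μ w := by
    rw [← Measure.restrict_apply' measurableSet_ball]
    refine le_trans ?_ (mul_meas_ge_le_lintegral₀ (by fun_prop) (ENNReal.ofReal ε))
    gcongr with w
    exact le_of_lt
  have h_weight : ∫⁻ w in ball ζ r, ENNReal.ofReal ‖w - ζ‖ * newtonPotential μ w ≤
      ENNReal.ofReal r * ∫⁻ w in ball ζ r, newtonPotential μ w := by
    rw [← lintegral_const_mul' _ _ ENNReal.ofReal_ne_top]
    refine setLIntegral_mono (by fun_prop) fun w hw => ?_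
    gcongr
    exact (mem_ball_iff_norm.mp hw).le
  have h_area : ENNReal.ofReal r * ENNReal.ofReal (π * r) = ENNReal.ofReal (π * r ^ 2) := by
    rw [← ENNReal.ofReal_mul hr.le]
    ring_nf
  rw [ENNReal.mul_le_iff_le_inv (by simpa using hε) ENNReal.ofReal_ne_top] at h_chebyshev
  refine h_chebyshev.trans ?_
  calc (ENNReal.ofReal ε)⁻¹ * ∫⁻ w in ball ζ r, ENNReal.ofReal ‖w - ζ‖ * newtonPotential μ w
      ≤ (ENNReal.ofReal ε)⁻¹ * (ENNReal.ofReal r * (ENNReal.ofReal (π * r) *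
          (3 * μ (closedBall ζ δ) + ENNReal.ofReal (2 * r / δ) * μ univ))) := by
        gcongr
        exact h_weight.trans (by gcongr; exact lintegral_ball_newtonPotential_le μ ζ hr hrδ)
    _ = _ := by rw [← mul_assoc (ENNReal.ofReal r), h_area]; ring

theorem tendsto_measure_closedBall_sqrt {X : Type*} [MetricSpace X] [ProperSpace X]
    [MeasurableSpace X] [OpensMeasurableSpace X] (μ : Measure X) [IsFiniteMeasureOnCompacts μ]
    (ζ : X) :
    Tendsto (fun r : ℝ => μ (closedBall ζ √r)) (𝓝 0) (𝓝 (μ {ζ})) := by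
  have h := (tendsto_measure_cthickening_of_isCompact (μ := μ) (isCompact_singleton (x := ζ))).comp
    (Real.continuous_sqrt.tendsto' 0 0 Real.sqrt_zero)
  simpa [Function.comp_def, cthickening_singleton _ (Real.sqrt_nonneg _)] using h

theorem stmt_6_general (μ : Measure ℂ) [IsProbabilityMeasure μ]
    (M : ℂ → ℝ≥0∞) (hM : ∀ ξ : ℂ, M ξ = ∫⁻ w, ENNReal.ofReal (1 / ‖w - ξ‖) ∂μ)
    (ζ : ℂ) (hζ : μ {ζ} = 0) (ε : ℝ) (hε : 0 < ε) :
    Tendsto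
      (fun r : ℝ =>
        volume ({w : ℂ | ENNReal.ofReal ε < ENNReal.ofReal (‖w - ζ‖) * M w}
            ∩ ball ζ r) / ENNReal.ofReal (π * r ^ 2))
      (𝓝[>] 0) (𝓝 0) := by
  obtain rfl : M = newtonPotential μ := funext hM
  have h_bound : Tendsto (fun r : ℝ =>
      (ENNReal.ofReal ε)⁻¹ * (3 * μ (closedBall ζ √r) + ENNReal.ofReal (2 * √r))) (𝓝 0) (𝓝 0) := by
    have h_ball := tendsto_measure_closedBall_sqrt μ ζ
    rw [hζ] at h_ball
    have h_sqrt : Tendsto (fun r : ℝ => ENNReal.ofReal (2 * √r)) (𝓝 0) (𝓝 0) :=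
      (ENNReal.continuous_ofReal.comp (by fun_prop : Continuous fun r : ℝ => 2 * √r)).tendsto'
        0 0 (by simp)
    have h_sum := (ENNReal.Tendsto.const_mul (a := 3) h_ball (by simp)).add h_sqrt
    simpa using ENNReal.Tendsto.const_mul (a := (ENNReal.ofReal ε)⁻¹) h_sum (by simp [hε])
  refine tendsto_of_tendsto_of_tendsto_of_le_of_le' tendsto_const_nhds
    (h_bound.mono_left nhdsWithin_le_nhds) (Eventually.of_forall fun _ => zero_le) ?_
  filter_upwards [Ioo_mem_nhdsGT (by norm_num : (0 : ℝ) < 1 / 4)] with r ⟨hr, hr4⟩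
  have h_sq := Real.sq_sqrt hr.le
  have h2r : 2 * r ≤ √r := by nlinarith [Real.sqrt_nonneg r]
  refine ENNReal.div_le_of_le_mul ((volume_inter_ball_le μ ζ hε hr h2r).trans_eq ?_)
  rw [measure_univ, mul_one, mul_div_assoc, Real.div_sqrt]

theorem stmt_6 (μ : Measure ℂ) [IsProbabilityMeasure μ]
    (K : Set ℂ) (hK : IsCompact K) (hsupp : μ Kᶜ = 0)
    (M : ℂ → ℝ≥0∞) (hM : ∀ ξ : ℂ, M ξ = ∫⁻ w, ENNReal.ofReal (1 / ‖w - ξ‖) ∂μ)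
    (ζ : ℂ) (hζ : μ {ζ} = 0) (ε : ℝ) (hε : 0 < ε) :
    Tendsto
      (fun r : ℝ =>
        volume ({w : ℂ | ENNReal.ofReal ε < ENNReal.ofReal (‖w - ζ‖) * M w}
            ∩ ball ζ r) / ENNReal.ofReal (π * r ^ 2))
      (𝓝[>] 0) (𝓝 0) :=
  stmt_6_general μ M hM ζ hζ ε hε
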